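/- arXiv:1903.06858 — 2 statements merged into one kernel-verified Lean document; each statement's English description precedes it below -/
import Mathlib

section
/- For the 2×2 complex matrices T = [[0,1],[0,0]] and A = [[1,1],[0,2]], T is numerical-radius orthogonal to A but T is not Birkhoff-James orthogonal to A in the operator norm. -/
open scoped InnerProductSpace

/-- Numerical radius of a bounded linear operator on a complex inner product space. -/
noncomputable def numRadius {E : Type*} [NormedAddCommGroup E] [InnerProductSpace ℂ E]
    (T : E →L[ℂ] E) : ℝ :=
  sSup {r : ℝ | ∃ x : E, ‖x‖ = 1 ∧ r = ‖⟪T x, x⟫_ℂ‖}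

/-- Numerical-radius orthogonality: `T ⊥_w A`. -/
def nrOrth {E : Type*} [NormedAddCommGroup E] [InnerProductSpace ℂ E]
    (T A : E →L[ℂ] E) : Prop :=
  ∀ l : ℂ, numRadius T ≤ numRadius (T + l • A)

/-!
Since `⟪T x, x⟫ = conj (x 1) * x 0`, the numerical radius of `T` is `1 / 2`. The matrix of
`T + λA` is `!![λ, 1 + λ; 0, 2λ]`; at the vectors `(1, ±1)` of squared norm `2` its quadratic form
takes the values `conj (1 + 4λ)` and `conj (2λ - 1)`, and `(1 + 4λ) - 2 (2λ - 1) = 3` forces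
`w(T + λA) ≥ 1 / 2`. Birkhoff–James orthogonality fails because `‖T‖ = 1` whereas
`‖T - A / 6‖ ≤ 11 / 12`.
-/

open Matrix ComplexConjugate

section NumericalRadius

variable {E : Type*} [NormedAddCommGroup E] [InnerProductSpace ℂ E]

lemma numRadius_bddAbove (S : E →L[ℂ] E) :
    BddAbove {r : ℝ | ∃ x : E, ‖x‖ = 1 ∧ r = ‖⟪S x, x⟫_ℂ‖} := by
  refine ⟨‖S‖, ?_⟩
  rintro r ⟨x, hx, rfl⟩
  calc ‖⟪S x, x⟫_ℂ‖ ≤ ‖S x‖ * ‖x‖ := norm_inner_le_norm _ _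
    _ ≤ ‖S‖ * ‖x‖ * ‖x‖ := by gcongr; exact S.le_opNorm x
    _ = ‖S‖ := by simp [hx]

lemma norm_inner_le_numRadius (S : E →L[ℂ] E) {x : E} (hx : ‖x‖ = 1) :
    ‖⟪S x, x⟫_ℂ‖ ≤ numRadius S :=
  le_csSup (numRadius_bddAbove S) ⟨x, hx, rfl⟩

lemma norm_inner_le_numRadius_mul_norm_sq (S : E →L[ℂ] E) (y : E) :
    ‖⟪S y, y⟫_ℂ‖ ≤ numRadius S * ‖y‖ ^ 2 := by
  rcases eq_or_ne y 0 with rfl | hy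
  · simp
  have hunit : ‖(‖y‖⁻¹ : ℂ) • y‖ = 1 := by
    simp [norm_smul, inv_mul_cancel₀ (norm_ne_zero_iff.mpr hy)]
  have h := norm_inner_le_numRadius S hunit
  rw [map_smul, inner_smul_left, inner_smul_right, norm_mul, norm_mul] at h
  have hpos : 0 < ‖y‖ := norm_pos_iff.mpr hy
  simp only [Complex.norm_conj, norm_inv, Complex.norm_real, Real.norm_eq_abs,
    abs_of_pos hpos] at h
  rw [← le_div_iff₀' (by positivity)] at h
  simpa [field, mul_comm] using h

lemma numRadius_le_of_forall {S : E →L[ℂ] E} {c : ℝ} (hc : 0 ≤ c)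
    (h : ∀ x : E, ‖x‖ = 1 → ‖⟪S x, x⟫_ℂ‖ ≤ c) : numRadius S ≤ c :=
  Real.sSup_le (by rintro r ⟨x, hx, rfl⟩; exact h x hx) hc

end NumericalRadius

section FinTwo

variable {𝕜 : Type*} [RCLike 𝕜]

lemma EuclideanSpace.norm_sq_fin_two (x : EuclideanSpace 𝕜 (Fin 2)) :
    ‖x‖ ^ 2 = ‖x 0‖ ^ 2 + ‖x 1‖ ^ 2 := by
  simp [EuclideanSpace.norm_sq_eq, Fin.sum_univ_two]

lemma EuclideanSpace.inner_fin_two (x y : EuclideanSpace 𝕜 (Fin 2)) :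
    ⟪x, y⟫_𝕜 = conj (x 0) * y 0 + conj (x 1) * y 1 := by
  simp [PiLp.inner_apply, Fin.sum_univ_two, mul_comm]

lemma toEuclideanCLM_fin_two_apply (M : Matrix (Fin 2) (Fin 2) 𝕜) (x : EuclideanSpace 𝕜 (Fin 2))
    (i : Fin 2) : toEuclideanCLM (𝕜 := 𝕜) M x i = M i 0 * x 0 + M i 1 * x 1 := by
  change (M *ᵥ WithLp.ofLp x) i = _
  simp [mulVec, dotProduct, Fin.sum_univ_two]

end FinTwo

local notation "𝐓" => toEuclideanCLM (𝕜 := ℂ) !![(0 : ℂ), 1; 0, 0]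
local notation "𝐀" => toEuclideanCLM (𝕜 := ℂ) !![(1 : ℂ), 1; 0, 2]

lemma numRadius_T_le : numRadius 𝐓 ≤ 1 / 2 := by
  refine numRadius_le_of_forall (by norm_num) fun x hx => ?_
  have hsum := EuclideanSpace.norm_sq_fin_two x
  simp only [EuclideanSpace.inner_fin_two, toEuclideanCLM_fin_two_apply] at hsum ⊢
  simp only [hx, of_apply, cons_val', cons_val_zero, cons_val_one, empty_val', cons_val_fin_one,
    zero_mul, one_mul, zero_add, map_zero, add_zero, norm_mul, Complex.norm_conj] at hsum ⊢
  nlinarith [sq_nonneg (‖x 0‖ - ‖x 1‖)]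

lemma T_add_smul_A (l : ℂ) : 𝐓 + l • 𝐀 = toEuclideanCLM (𝕜 := ℂ) !![l, 1 + l; 0, 2 * l] := by
  rw [← map_smul, ← map_add]
  congr 1
  ext i j
  fin_cases i <;> fin_cases j <;> simp [add_comm, mul_comm]

lemma norm_fin_two_quadratic_le_numRadius (M : Matrix (Fin 2) (Fin 2) ℂ) (s : ℝ) :
    ‖M 0 0 + s * (M 0 1 + M 1 0) + s ^ 2 * M 1 1‖ ≤
      numRadius (toEuclideanCLM (𝕜 := ℂ) M) * (1 + s ^ 2) := by
  convert norm_inner_le_numRadius_mul_norm_sq (toEuclideanCLM (𝕜 := ℂ) M) !₂[1, (s : ℂ)] using 1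
  · rw [← Complex.norm_conj]
    congr 1
    simp [EuclideanSpace.inner_fin_two]
    ring
  · simp [EuclideanSpace.norm_sq_fin_two]

lemma half_le_numRadius_T_add_smul_A (l : ℂ) : 1 / 2 ≤ numRadius (𝐓 + l • 𝐀) := by
  rw [T_add_smul_A]
  have hplus := norm_fin_two_quadratic_le_numRadius !![l, 1 + l; 0, 2 * l] 1
  have hminus := norm_fin_two_quadratic_le_numRadius !![l, 1 + l; 0, 2 * l] (-1)
  norm_num at hplus hminus
  have htri := norm_sub_le (l + (1 + l) + 2 * l) (2 * (-1 + 2 * l))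
  rw [show l + (1 + l) + 2 * l - 2 * (-1 + 2 * l) = 3 by ring, norm_mul] at htri
  norm_num at htri
  linarith

lemma one_le_norm_T : 1 ≤ ‖𝐓‖ := by
  have h := 𝐓.unit_le_opNorm !₂[0, 1] (by simp [EuclideanSpace.norm_eq, Fin.sum_univ_two])
  simpa [EuclideanSpace.norm_eq, Fin.sum_univ_two, toEuclideanCLM_fin_two_apply] using h

lemma norm_T_sub_sixth_A_le : ‖𝐓 + (-(1 / 6) : ℂ) • 𝐀‖ ≤ 11 / 12 := by
  rw [T_add_smul_A]
  refine ContinuousLinearMap.opNorm_le_bound _ (by norm_num) fun x => ?_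
  rw [← pow_le_pow_iff_left₀ (norm_nonneg _) (by positivity) two_ne_zero, mul_pow,
    EuclideanSpace.norm_sq_fin_two, EuclideanSpace.norm_sq_fin_two,
    toEuclideanCLM_fin_two_apply, toEuclideanCLM_fin_two_apply]
  simp only [of_apply, cons_val', cons_val_zero, cons_val_one, empty_val', cons_val_fin_one]
  have hfirst : ‖-(1 / 6) * x 0 + (1 + -(1 / 6)) * x 1‖ ≤ 1 / 6 * ‖x 0‖ + 5 / 6 * ‖x 1‖ :=
    (norm_add_le _ _).trans_eq (by norm_num [norm_mul])
  have hsecond : ‖0 * x 0 + 2 * -(1 / 6) * x 1‖ = 1 / 3 * ‖x 1‖ := by norm_num [norm_mul]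
  rw [hsecond]
  nlinarith [pow_le_pow_left₀ (norm_nonneg _) hfirst 2, sq_nonneg (9 * ‖x 0‖ - 2 * ‖x 1‖)]

theorem stmt4 :
    let T : Matrix (Fin 2) (Fin 2) ℂ := !![0, 1; 0, 0]
    let A : Matrix (Fin 2) (Fin 2) ℂ := !![1, 1; 0, 2]
    nrOrth (Matrix.toEuclideanCLM (𝕜 := ℂ) T) (Matrix.toEuclideanCLM (𝕜 := ℂ) A) ∧
      ¬ (∀ l : ℂ, ‖(Matrix.toEuclideanCLM (𝕜 := ℂ) T : EuclideanSpace ℂ (Fin 2) →L[ℂ] EuclideanSpace ℂ (Fin 2))‖ ≤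
          ‖(Matrix.toEuclideanCLM (𝕜 := ℂ) T : EuclideanSpace ℂ (Fin 2) →L[ℂ] EuclideanSpace ℂ (Fin 2)) +
            l • Matrix.toEuclideanCLM (𝕜 := ℂ) A‖) := by
  intro T A
  refine ⟨fun l => numRadius_T_le.trans (half_le_numRadius_T_add_smul_A l), fun h => ?_⟩
  have := one_le_norm_T.trans ((h (-(1 / 6))).trans norm_T_sub_sixth_A_le)
  norm_num at this
end

section
/- Let H be a complex Hilbert space and A = (A_{jk}) an n×n operator matrix with all entries in B(H), acting on H^n. Then w(A) ≥ max{w(A_{kk}), w(A_{ij}+A_{ji})/2, w(A_{ij}−A_{ji})/2 : 1 ≤ i,j,k ≤ n}. -/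
open scoped InnerProductSpace

/-!
Each inequality comes from testing the block operator `S` on vectors supported in at most two
coordinates. For `x ∈ H` write `x⁽ᵏ⁾` for `x` placed in coordinate `k`; then
`⟪S x⁽ᵏ⁾, y⁽ˡ⁾⟫ = ⟪A_{lk} x, y⟫`, which gives `w(A_{kk}) ≤ w(S)` at once. For an arbitrary
operator `T` the polarization identity
`2 (⟪T u, v⟫ + ⟪T v, u⟫) = ⟪T (u + v), u + v⟫ - ⟪T (u - v), u - v⟫` and the parallelogram law give
`‖⟪T u, v⟫ + ⟪T v, u⟫‖ ≤ w(T) (‖u‖² + ‖v‖²)`. Applied to `u = x⁽ⁱ⁾` and `v = θ x⁽ʲ⁾` with `|θ| = 1`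
this bounds `‖θ̄ ⟪A_{ij} x, x⟫ + θ ⟪A_{ji} x, x⟫‖` by `2 w(S)`; take `θ = 1` and `θ = i`.
-/

section NumericalRadius

variable {E : Type*} [NormedAddCommGroup E] [InnerProductSpace ℂ E]

lemma numRadius_nonneg (T : E →L[ℂ] E) : 0 ≤ numRadius T :=
  Real.sSup_nonneg (by rintro r ⟨x, -, rfl⟩; positivity)

lemma bddAbove_numRadius_set (T : E →L[ℂ] E) :
    BddAbove {r : ℝ | ∃ x : E, ‖x‖ = 1 ∧ r = ‖⟪T x, x⟫_ℂ‖} := by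
  refine ⟨‖T‖, ?_⟩
  rintro r ⟨x, hx, rfl⟩
  calc ‖⟪T x, x⟫_ℂ‖ ≤ ‖T x‖ * ‖x‖ := norm_inner_le_norm _ _
    _ ≤ ‖T‖ * ‖x‖ * ‖x‖ := by gcongr; exact T.le_opNorm x
    _ = ‖T‖ := by rw [hx, mul_one, mul_one]

lemma norm_inner_self_le_numRadius (T : E →L[ℂ] E) {x : E} (hx : ‖x‖ = 1) :
    ‖⟪T x, x⟫_ℂ‖ ≤ numRadius T :=
  le_csSup (bddAbove_numRadius_set T) ⟨x, hx, rfl⟩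

lemma numRadius_le {T : E →L[ℂ] E} {c : ℝ} (hc : 0 ≤ c)
    (h : ∀ x : E, ‖x‖ = 1 → ‖⟪T x, x⟫_ℂ‖ ≤ c) : numRadius T ≤ c :=
  Real.sSup_le (by rintro r ⟨x, hx, rfl⟩; exact h x hx) hc

lemma norm_inner_self_le_numRadius_mul_sq (T : E →L[ℂ] E) (z : E) :
    ‖⟪T z, z⟫_ℂ‖ ≤ numRadius T * ‖z‖ ^ 2 := by
  rcases eq_or_ne z 0 with rfl | hz
  · simp
  have hz' : ‖z‖ ≠ 0 := norm_ne_zero_iff.2 hz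
  have hunit : ‖(‖z‖⁻¹ : ℂ) • z‖ = 1 := by
    rw [norm_smul, norm_inv, Complex.norm_real, norm_norm, inv_mul_cancel₀ hz']
  have h := norm_inner_self_le_numRadius T hunit
  rw [map_smul, inner_smul_left, inner_smul_right, norm_mul, norm_mul, RCLike.norm_conj,
    norm_inv, Complex.norm_real, norm_norm, ← mul_assoc, ← sq, inv_pow] at h
  rwa [inv_mul_le_iff₀ (by positivity), mul_comm] at h

lemma norm_inner_add_inner_le_numRadius (T : E →L[ℂ] E) (u v : E) :
    ‖⟪T u, v⟫_ℂ + ⟪T v, u⟫_ℂ‖ ≤ numRadius T * (‖u‖ ^ 2 + ‖v‖ ^ 2) := by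
  have polarization : 2 * (⟪T u, v⟫_ℂ + ⟪T v, u⟫_ℂ) =
      ⟪T (u + v), u + v⟫_ℂ - ⟪T (u - v), u - v⟫_ℂ := by
    simp only [map_add, map_sub, inner_add_left, inner_add_right, inner_sub_left,
      inner_sub_right]
    ring
  have h2 : ‖(2 : ℂ) * (⟪T u, v⟫_ℂ + ⟪T v, u⟫_ℂ)‖ ≤
      numRadius T * (‖u + v‖ ^ 2 + ‖u - v‖ ^ 2) := by
    rw [polarization, mul_add]
    exact (norm_sub_le _ _).trans (add_le_add (norm_inner_self_le_numRadius_mul_sq T _)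
      (norm_inner_self_le_numRadius_mul_sq T _))
  rw [parallelogram_law_with_norm ℂ, norm_mul, Complex.norm_two] at h2
  linarith

end NumericalRadius

section OperatorMatrix

variable {n : ℕ} {H : Type*} [NormedAddCommGroup H] [InnerProductSpace ℂ H]
  {A : Fin n → Fin n → (H →L[ℂ] H)}
  {S : PiLp 2 (fun _ : Fin n => H) →L[ℂ] PiLp 2 (fun _ : Fin n => H)}

lemma inner_apply_single_single
    (hS : ∀ z : PiLp 2 (fun _ : Fin n => H), ∀ j,
      (WithLp.equiv 2 (Fin n → H)) (S z) j =
        ∑ k, A j k ((WithLp.equiv 2 (Fin n → H)) z k))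
    (k l : Fin n) (x y : H) :
    ⟪S (PiLp.single 2 k x), PiLp.single 2 l y⟫_ℂ = ⟪A l k x, y⟫_ℂ := by
  have hcoord : S (PiLp.single 2 k x) l = A l k x := by
    simpa [Pi.single_apply, apply_ite] using hS (PiLp.single 2 k x) l
  rw [PiLp.inner_apply, Finset.sum_eq_single l (fun m _ hm => by simp [hm]) (by simp),
    PiLp.single_eq_same, hcoord]

lemma norm_conj_mul_inner_add_mul_inner_le
    (hS : ∀ z : PiLp 2 (fun _ : Fin n => H), ∀ j,
      (WithLp.equiv 2 (Fin n → H)) (S z) j =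
        ∑ k, A j k ((WithLp.equiv 2 (Fin n → H)) z k))
    (i j : Fin n) {x : H} (hx : ‖x‖ = 1) {θ : ℂ} (hθ : ‖θ‖ = 1) :
    ‖(starRingEnd ℂ) θ * ⟪A i j x, x⟫_ℂ + θ * ⟪A j i x, x⟫_ℂ‖ ≤ 2 * numRadius S := by
  have h := norm_inner_add_inner_le_numRadius S (PiLp.single 2 i x) (θ • PiLp.single 2 j x)
  rw [map_smul, inner_smul_left, inner_smul_right, inner_apply_single_single hS,
    inner_apply_single_single hS, norm_smul, PiLp.norm_single, PiLp.norm_single, hx, hθ] at h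
  rw [add_comm]
  convert h using 1
  ring

end OperatorMatrix

theorem stmt18_general {n : ℕ} {H : Type*} [NormedAddCommGroup H] [InnerProductSpace ℂ H]
    (A : Fin n → Fin n → (H →L[ℂ] H))
    (S : PiLp 2 (fun _ : Fin n => H) →L[ℂ] PiLp 2 (fun _ : Fin n => H))
    (hS : ∀ z : PiLp 2 (fun _ : Fin n => H), ∀ j,
      (WithLp.equiv 2 (Fin n → H)) (S z) j =
        ∑ k, A j k ((WithLp.equiv 2 (Fin n → H)) z k)) :
    (∀ k, numRadius (A k k) ≤ numRadius S) ∧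
      (∀ i j, numRadius (A i j + A j i) / 2 ≤ numRadius S) ∧
      (∀ i j, numRadius (A i j - A j i) / 2 ≤ numRadius S) := by
  have hw : 0 ≤ numRadius S := numRadius_nonneg S
  have hw2 : 0 ≤ numRadius S * 2 := by positivity
  refine ⟨fun k => numRadius_le hw fun x hx => ?_,
    fun i j => (div_le_iff₀ two_pos).2 <| numRadius_le hw2 fun x hx => ?_,
    fun i j => (div_le_iff₀ two_pos).2 <| numRadius_le hw2 fun x hx => ?_⟩
  · rw [← inner_apply_single_single hS]
    exact norm_inner_self_le_numRadius S (by rwa [PiLp.norm_single])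
  · have h := norm_conj_mul_inner_add_mul_inner_le hS i j hx norm_one
    rw [map_one, one_mul, one_mul, mul_comm] at h
    rwa [add_apply, inner_add_left]
  · have h := norm_conj_mul_inner_add_mul_inner_le hS i j hx Complex.norm_I
    have hrot : (starRingEnd ℂ) Complex.I * ⟪A i j x, x⟫_ℂ + Complex.I * ⟪A j i x, x⟫_ℂ =
        -Complex.I * ⟪(A i j - A j i) x, x⟫_ℂ := by
      rw [Complex.conj_I, sub_apply, inner_sub_left]
      ring
    rwa [hrot, norm_mul, norm_neg, Complex.norm_I, one_mul, mul_comm] at h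

theorem stmt18 {n : ℕ} {H : Type*} [NormedAddCommGroup H] [InnerProductSpace ℂ H]
    [CompleteSpace H]
    (A : Fin n → Fin n → (H →L[ℂ] H))
    (S : PiLp 2 (fun _ : Fin n => H) →L[ℂ] PiLp 2 (fun _ : Fin n => H))
    (hS : ∀ z : PiLp 2 (fun _ : Fin n => H), ∀ j,
      (WithLp.equiv 2 (Fin n → H)) (S z) j =
        ∑ k, A j k ((WithLp.equiv 2 (Fin n → H)) z k)) :
    (∀ k, numRadius (A k k) ≤ numRadius S) ∧
      (∀ i j, numRadius (A i j + A j i) / 2 ≤ numRadius S) ∧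
      (∀ i j, numRadius (A i j - A j i) / 2 ≤ numRadius S) :=
  stmt18_general A S hS
end
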